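/- arXiv:2605.16287 — 6 statements merged into one kernel-verified Lean document; each statement's English description precedes it below -/
import Mathlib

section
/- Assume in addition that −λq < 1 + λ r log p. Then for every integer m ≥ 1, the m-th moment of the degenerate Pascal weights satisfies: Σ_{n=0}^∞ n^m · (q^n/n!) (β)_{n,λ} (1 + λ r log p)^{β/λ − n} = (1 + λ r log p)^{β/λ} · Σ_{k=1}^m S(m,k) · (q/(1 + λ r log p))^k · (β)_{k,λ} · (1 + λ q/(1 + λ r log p))^{β/λ − k}, the series on the left being absolutely convergent. -/
open Finset

/-- degenerate falling factorial `(β)_{k,lam}` -/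
noncomputable def dff (β lam : ℝ) (k : ℕ) : ℝ := ∏ i ∈ Finset.range k, (β - i * lam)

/-- Stirling numbers of the second kind -/
noncomputable def S2 (n k : ℕ) : ℝ :=
  iteratedDeriv n (fun z : ℝ => (Real.exp z - 1) ^ k) 0 / k.factorial

/-!
With `w n = dff β λ n · xⁿ / n!`, the generalized binomial theorem gives
`∑ₙ w n = (1 + λx)^(β/λ)` for `|λx| < 1`. Since `dff β λ (k + n) = dff β λ k · dff (β - kλ) λ n`,
the factorial moments `∑ₙ n.descFactorial k · w n` are again binomial series, equal to
`dff β λ k · xᵏ · (1 + λx)^(β/λ - k)`, and `nᵐ = ∑ₖ S(m,k) · n.descFactorial k` turns them into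
the moments. As `λq ≤ 0`, the hypothesis `-λq < 1 + λ r log p` makes the base positive and gives
`|λx| < 1` for `x = q / (1 + λ r log p)`; absolute convergence is free, since a summable real
series is absolutely summable.
-/

open Nat Real

lemma Ring.choose_real_eq_prod_div_factorial (a : ℝ) (n : ℕ) :
    Ring.choose a n = (∏ j ∈ range n, (a - j)) / n ! := by
  rw [Ring.choose_eq_smul, smul_eq_mul, ← Polynomial.aeval_eq_smeval, Polynomial.aeval_def,
    Polynomial.eval₂_eq_eval_map, descPochhammer_map, descPochhammer_eval_eq_prod_range,
    inv_mul_eq_div]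

lemma Real.hasSum_choose_mul_pow {a x : ℝ} (hx : |x| < 1) :
    HasSum (fun n ↦ Ring.choose a n * x ^ n) ((1 + x) ^ a) := by
  have h := (one_add_rpow_hasFPowerSeriesOnBall_zero (a := a)).hasSum
    (y := x) (by simpa [← ENNReal.ofReal_one, Metric.eball_ofReal] using hx)
  simpa [binomialSeries, FormalMultilinearSeries.coeff_ofScalars, mul_comm] using h

theorem Nat.mul_descFactorial (n k : ℕ) :
    n * n.descFactorial k = n.descFactorial (k + 1) + k * n.descFactorial k := by
  rcases le_or_gt k n with h | h
  · rw [descFactorial_succ, ← add_mul, Nat.sub_add_cancel h]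
  · simp [descFactorial_eq_zero_iff_lt.2 h]

theorem Nat.pow_eq_sum_stirlingSecond_mul_descFactorial (n m : ℕ) :
    n ^ m = ∑ k ∈ range (m + 1), stirlingSecond m k * n.descFactorial k := by
  induction m with
  | zero => simp
  | succ m ih =>
    have hshift : ∑ k ∈ range (m + 1), stirlingSecond m k * (k * n.descFactorial k) =
        ∑ k ∈ range (m + 1), (k + 1) * stirlingSecond m (k + 1) * n.descFactorial (k + 1) := by
      rw [sum_range_succ', sum_range_succ, stirlingSecond_eq_zero_of_lt (lt_add_one m)]
      simp only [zero_mul, mul_zero, add_zero]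
      exact sum_congr rfl fun k _ ↦ by ring
    calc n ^ (m + 1)
        = ∑ k ∈ range (m + 1), (stirlingSecond m k * n.descFactorial (k + 1) +
            stirlingSecond m k * (k * n.descFactorial k)) := by
          rw [pow_succ, ih, sum_mul]
          exact sum_congr rfl fun k _ ↦ by rw [mul_assoc, mul_comm _ n, mul_descFactorial]; ring
      _ = ∑ k ∈ range (m + 1), stirlingSecond (m + 1) (k + 1) * n.descFactorial (k + 1) := by
          rw [sum_add_distrib, hshift, ← sum_add_distrib]
          exact sum_congr rfl fun k _ ↦ by rw [stirlingSecond_succ_succ]; ring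
      _ = _ := by simp [sum_range_succ' _ (m + 1)]

lemma Nat.sum_range_succ_stirlingSecond_mul_eq_sum_Icc {m : ℕ} (hm : m ≠ 0) (f : ℕ → ℝ) :
    ∑ k ∈ range (m + 1), (stirlingSecond m k : ℝ) * f k =
      ∑ k ∈ Icc 1 m, (stirlingSecond m k : ℝ) * f k := by
  refine (sum_subset (fun k hk ↦ ?_) fun k hk hk' ↦ ?_).symm
  · simp only [mem_Icc, mem_range] at hk ⊢
    omega
  · obtain rfl : k = 0 := by simp only [mem_Icc, mem_range] at hk hk'; omega
    obtain ⟨m, rfl⟩ := exists_eq_succ_of_ne_zero hm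
    simp

lemma deriv_exp_sub_one_pow_succ (k : ℕ) :
    deriv (fun z : ℝ ↦ (exp z - 1) ^ (k + 1)) =
      fun z ↦ (k + 1) * (exp z - 1) ^ (k + 1) + (k + 1) * (exp z - 1) ^ k := by
  ext z
  rw [(((hasDerivAt_exp z).sub_const 1).fun_pow (k + 1)).deriv]
  push_cast
  ring

lemma iteratedDeriv_exp_sub_one_pow (m k : ℕ) :
    iteratedDeriv m (fun z : ℝ ↦ (exp z - 1) ^ k) 0 = k ! * stirlingSecond m k := by
  induction m generalizing k with
  | zero => cases k <;> simp
  | succ m ih =>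
    cases k with
    | zero => simp [iteratedDeriv_const]
    | succ k =>
      rw [iteratedDeriv_succ', deriv_exp_sub_one_pow_succ,
        iteratedDeriv_fun_add (by fun_prop) (by fun_prop), iteratedDeriv_const_mul_field,
        iteratedDeriv_const_mul_field, ih, ih, stirlingSecond_succ_succ, factorial_succ]
      push_cast
      ring

lemma S2_eq_stirlingSecond (m k : ℕ) : S2 m k = stirlingSecond m k := by
  rw [S2, iteratedDeriv_exp_sub_one_pow, mul_div_cancel_left₀ _ (by positivity)]

lemma dff_div_factorial {lam : ℝ} (hlam : lam ≠ 0) (β : ℝ) (n : ℕ) :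
    dff β lam n / n ! = Ring.choose (β / lam) n * lam ^ n := by
  rw [Ring.choose_real_eq_prod_div_factorial, dff, show lam ^ n = ∏ _i ∈ range n, lam by simp,
    div_mul_eq_mul_div, ← prod_mul_distrib]
  congr 1
  refine prod_congr rfl fun i _ ↦ ?_
  field_simp

lemma dff_add (β lam : ℝ) (k n : ℕ) :
    dff β lam (k + n) = dff β lam k * dff (β - k * lam) lam n := by
  rw [dff, prod_range_add]
  congr 1
  refine prod_congr rfl fun i _ ↦ ?_
  push_cast
  ring

section DegenerateBinomial

variable {lam x : ℝ} (hlam : lam ≠ 0) (β : ℝ) (hx : |lam * x| < 1)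
include hlam hx

lemma hasSum_dff_mul_pow :
    HasSum (fun n : ℕ ↦ dff β lam n * x ^ n / n !) ((1 + lam * x) ^ (β / lam)) := by
  convert hasSum_choose_mul_pow (a := β / lam) hx using 2 with n
  rw [mul_div_right_comm, dff_div_factorial hlam, mul_pow, mul_assoc]

lemma hasSum_descFactorial_mul_dff_mul_pow (k : ℕ) :
    HasSum (fun n : ℕ ↦ n.descFactorial k * (dff β lam n * x ^ n / n !))
      (dff β lam k * x ^ k * (1 + lam * x) ^ (β / lam - k)) := by
  rw [← hasSum_nat_add_iff' k, sum_eq_zero fun i hi ↦ by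
    simp [descFactorial_eq_zero_iff_lt.2 (mem_range.1 hi)], sub_zero]
  have h := (hasSum_dff_mul_pow hlam (β - k * lam) hx).mul_left (dff β lam k * x ^ k)
  rw [sub_div, mul_div_cancel_right₀ _ hlam] at h
  refine h.congr_fun fun n ↦ ?_
  have hfac : (n + k)! = n ! * (n + k).descFactorial k := by
    simpa using (factorial_mul_descFactorial (le_add_left k n)).symm
  rw [hfac, add_comm n k, dff_add, pow_add]
  push_cast
  field_simp

theorem hasSum_pow_mul_dff_mul_pow (m : ℕ) :
    HasSum (fun n : ℕ ↦ (n : ℝ) ^ m * (dff β lam n * x ^ n / n !))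
      (∑ k ∈ range (m + 1),
        stirlingSecond m k * (dff β lam k * x ^ k * (1 + lam * x) ^ (β / lam - k))) := by
  refine (hasSum_sum fun k _ ↦ (hasSum_descFactorial_mul_dff_mul_pow hlam β hx k).mul_left
    (stirlingSecond m k : ℝ)).congr_fun fun n ↦ ?_
  simp only [← mul_assoc, ← sum_mul]
  congr 1
  exact_mod_cast pow_eq_sum_stirlingSecond_mul_descFactorial n m

end DegenerateBinomial

theorem stmt3_general (lam β p q r : ℝ) (m : ℕ) (hlam : lam < 0)
    (hp1 : p < 1) (hq : q = 1 - p) (hm : 1 ≤ m)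
    (hcond : -lam * q < 1 + lam * r * Real.log p) :
    Summable (fun n : ℕ =>
      |(n : ℝ) ^ m * q ^ n / n.factorial * dff β lam n *
        (1 + lam * r * Real.log p) ^ (β / lam - n)|) ∧
    ∑' n : ℕ, (n : ℝ) ^ m * q ^ n / n.factorial * dff β lam n *
        (1 + lam * r * Real.log p) ^ (β / lam - n)
      = (1 + lam * r * Real.log p) ^ (β / lam) *
        ∑ k ∈ Finset.Icc 1 m,
          S2 m k * (q / (1 + lam * r * Real.log p)) ^ k * dff β lam k *
            (1 + lam * q / (1 + lam * r * Real.log p)) ^ (β / lam - k) := by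
  set A := 1 + lam * r * Real.log p
  have hlamq : lam * q ≤ 0 := mul_nonpos_of_nonpos_of_nonneg hlam.le (by linarith)
  have hA : 0 < A := by linarith
  have hx : |lam * (q / A)| < 1 := by
    rw [← mul_div_assoc, abs_div, abs_of_nonpos hlamq, abs_of_pos hA, div_lt_one hA]
    linarith
  have hsum := (hasSum_pow_mul_dff_mul_pow hlam.ne β hx m).mul_left (A ^ (β / lam))
  have hterm (n : ℕ) : (n : ℝ) ^ m * q ^ n / n ! * dff β lam n * A ^ (β / lam - n) =
      A ^ (β / lam) * ((n : ℝ) ^ m * (dff β lam n * (q / A) ^ n / n !)) := by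
    rw [rpow_sub_natCast hA.ne', div_pow]
    field_simp
  simp only [← hterm] at hsum
  refine ⟨summable_abs_iff.2 hsum.summable, hsum.tsum_eq.trans ?_⟩
  rw [sum_range_succ_stirlingSecond_mul_eq_sum_Icc (by omega)]
  refine congrArg _ (sum_congr rfl fun k _ ↦ ?_)
  rw [S2_eq_stirlingSecond, mul_div_assoc]
  ring

theorem stmt3 (lam β p q r : ℝ) (m : ℕ) (hlam : lam < 0) (hβ : 0 < β)
    (hp : 0 < p) (hp1 : p < 1) (hq : q = 1 - p) (hr : 0 < r) (hm : 1 ≤ m)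
    (hcond : -lam * q < 1 + lam * r * Real.log p) :
    Summable (fun n : ℕ =>
      |(n : ℝ) ^ m * q ^ n / n.factorial * dff β lam n *
        (1 + lam * r * Real.log p) ^ (β / lam - n)|) ∧
    ∑' n : ℕ, (n : ℝ) ^ m * q ^ n / n.factorial * dff β lam n *
        (1 + lam * r * Real.log p) ^ (β / lam - n)
      = (1 + lam * r * Real.log p) ^ (β / lam) *
        ∑ k ∈ Finset.Icc 1 m,
          S2 m k * (q / (1 + lam * r * Real.log p)) ^ k * dff β lam k *
            (1 + lam * q / (1 + lam * r * Real.log p)) ^ (β / lam - k) :=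
  stmt3_general lam β p q r m hlam hp1 hq hm hcond
end

section
/- For every n ∈ ℕ and every real x, K^{(β)}_{n,λ}(x) = Σ_{k=0}^n (n!/(n−k)!) · r^{n−k} · c_{n−k}(r) · ε_k(x). -/
/-
The generating function factors as ((1+t)/(1+qt))^x · L(t)^(-β/λ) with
L(t) = 1 + λ r log(1+qt), so by Leibniz's rule it suffices to know the derivatives of
both factors at 0. Writing the first factor as (1+qt)^(-x) · (1+t)^x near 0, Leibniz's rule
gives k! ε_k(x) for its k-th derivative. The second factor is the reciprocal of
L(t)^(β/λ), whose derivatives are the g_i; differentiating their product, which is 1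
near 0, yields a recursion for its derivatives that is the recursion of c_m(r)
rescaled by r^m.
-/

open Finset

/-- generalized binomial coefficient `C(v, n)` -/
noncomputable def genBinom (v : ℝ) (n : ℕ) : ℝ :=
  (∏ i ∈ Finset.range n, (v - i)) / n.factorial

/-- degenerate Krawtchouk Appell polynomials -/
noncomputable def K (lam β q r : ℝ) (n : ℕ) (x : ℝ) : ℝ :=
  iteratedDeriv n
    (fun t : ℝ => ((1 + t) / (1 + q * t)) ^ x *
      (1 + lam * r * Real.log (1 + q * t)) ^ (-β / lam)) 0

/-- derivatives at 0 of the Laplace transform composed with `log(1+qt)` -/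
noncomputable def gg (lam β q r : ℝ) (m : ℕ) : ℝ :=
  iteratedDeriv m (fun t : ℝ => (1 + lam * r * Real.log (1 + q * t)) ^ (β / lam)) 0

/-- Taylor coefficients of `((1+t)/(1+qt))^x` -/
noncomputable def eps (q x : ℝ) (k : ℕ) : ℝ :=
  ∑ j ∈ Finset.range (k + 1),
    (-1 : ℝ) ^ j * genBinom x (k - j) * genBinom (x + j - 1) j * q ^ j

noncomputable def cc (lam β q r : ℝ) : ℕ → ℝ
  | 0 => 1
  | (n + 1) =>
    -∑ i ∈ Finset.range (n + 1),
      ((n + 1).choose (i + 1) : ℝ) * (r ^ (i + 1))⁻¹ * gg lam β q r (i + 1) *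
        cc lam β q r (n - i)
  termination_by n => n
  decreasing_by omega

open Filter Topology Nat

lemma prod_range_neg_sub (x : ℝ) (j : ℕ) :
    ∏ i ∈ range j, (-x - i) = (-1) ^ j * ∏ i ∈ range j, (x + j - 1 - i) := by
  simp only [← descPochhammer_eval_eq_prod_range]
  rw [descPochhammer_eval_eq_ascPochhammer, ← ascPochhammer_eval_neg_eq_descPochhammer]
  ring_nf

lemma iteratedDeriv_succ_eq_neg_sum_of_mul_eq_one {𝕜 : Type*} [NontriviallyNormedField 𝕜]
    {f g : 𝕜 → 𝕜} {x : 𝕜} {n : ℕ} (hf : ContDiffAt 𝕜 (n + 1) f x)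
    (hg : ContDiffAt 𝕜 (n + 1) g x) (hgf : ∀ᶠ t in 𝓝 x, g t * f t = 1) (hg₀ : g x = 1) :
    iteratedDeriv (n + 1) f x = -∑ i ∈ range (n + 1),
      ((n + 1).choose (i + 1) : 𝕜) * iteratedDeriv (i + 1) g x * iteratedDeriv (n - i) f x := by
  have hLeibniz := iteratedDeriv_fun_mul (n := n + 1) hg hf
  rw [EventuallyEq.iteratedDeriv_eq (n + 1) hgf, iteratedDeriv_const, sum_range_succ'] at hLeibniz
  simp only [succ_ne_zero, if_false, choose_zero_right, cast_one, one_mul, iteratedDeriv_zero,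
    hg₀, Nat.sub_zero, add_tsub_add_eq_tsub_right] at hLeibniz
  exact eq_neg_of_add_eq_zero_right hLeibniz.symm

lemma eventually_pos_one_add_mul {c t : ℝ} (ht : 0 < 1 + c * t) :
    ∀ᶠ s in 𝓝 t, 0 < 1 + c * s :=
  continuousAt_const.eventually_lt (by fun_prop) ht

lemma iteratedDeriv_one_add_mul_rpow (c y : ℝ) (k : ℕ) {t : ℝ} (ht : 0 < 1 + c * t) :
    iteratedDeriv k (fun t => (1 + c * t) ^ y) t
      = (∏ i ∈ range k, (y - i)) * c ^ k * (1 + c * t) ^ (y - k) := by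
  induction k generalizing t with
  | zero => simp
  | succ k ih =>
    have hev : iteratedDeriv k (fun t => (1 + c * t) ^ y) =ᶠ[𝓝 t]
        fun t => (∏ i ∈ range k, (y - i)) * c ^ k * (1 + c * t) ^ (y - k) := by
      filter_upwards [eventually_pos_one_add_mul ht] with s hs
      exact ih hs
    have hbase : HasDerivAt (fun t : ℝ => 1 + c * t) c t := by
      simpa using ((hasDerivAt_id t).const_mul c).const_add 1
    rw [iteratedDeriv_succ, hev.deriv_eq,
      ((hbase.rpow_const (p := y - k) (.inl ht.ne')).const_mul _).deriv, prod_range_succ]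
    push_cast
    rw [sub_add_eq_sub_sub]
    ring

lemma iteratedDeriv_div_rpow_zero (q x : ℝ) (k : ℕ) :
    iteratedDeriv k (fun t => ((1 + t) / (1 + q * t)) ^ x) 0 = k ! * eps q x k := by
  have hsplit : (fun t => ((1 + t) / (1 + q * t)) ^ x) =ᶠ[𝓝 0]
      fun t => (1 + q * t) ^ (-x) * (1 + 1 * t) ^ x := by
    filter_upwards [eventually_pos_one_add_mul (c := 1) (by simp),
      eventually_pos_one_add_mul (c := q) (by simp)] with t h1 hq
    rw [one_mul] at h1 ⊢
    rw [Real.div_rpow h1.le hq.le, Real.rpow_neg hq.le, div_eq_inv_mul]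
  rw [hsplit.iteratedDeriv_eq, iteratedDeriv_fun_mul (by fun_prop (disch := simp))
    (by fun_prop (disch := simp)), eps, mul_sum]
  refine sum_congr rfl fun j hj => ?_
  have hjk : j ≤ k := Nat.lt_succ_iff.mp (mem_range.mp hj)
  rw [iteratedDeriv_one_add_mul_rpow _ _ _ (by simp),
    iteratedDeriv_one_add_mul_rpow _ _ _ (by simp), prod_range_neg_sub, genBinom, genBinom]
  have hfact : (k.choose j : ℝ) * j ! * (k - j)! = k ! := by
    exact_mod_cast choose_mul_factorial_mul_factorial hjk
  simp only [mul_zero, add_zero, Real.one_rpow, one_pow, mul_one]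
  field_simp
  rw [← hfact]
  ring

lemma iteratedDeriv_one_add_mul_log_rpow_zero (lam β q r : ℝ) (hr : r ≠ 0) (m : ℕ) :
    iteratedDeriv m (fun t => (1 + lam * r * Real.log (1 + q * t)) ^ (-β / lam)) 0
      = r ^ m * cc lam β q r m := by
  induction m using Nat.strong_induction_on with
  | _ m ih =>
    match m with
    | 0 => simp [cc]
    | n + 1 =>
      rw [iteratedDeriv_succ_eq_neg_sum_of_mul_eq_one (g := fun t =>
          (1 + lam * r * Real.log (1 + q * t)) ^ (β / lam))
        (by fun_prop (disch := simp)) (by fun_prop (disch := simp)) ?_ (by simp), cc]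
      · rw [mul_neg, mul_sum]
        refine congrArg _ (sum_congr rfl fun i hi => ?_)
        rw [ih (n - i) (by omega), ← gg]
        have hpow : r ^ (n + 1) * (r ^ (i + 1))⁻¹ = r ^ (n - i) := by
          rw [← pow_sub₀ _ hr (by simp at hi; omega)]
          congr 1
          omega
        linear_combination
          ((n + 1).choose (i + 1) * gg lam β q r (i + 1) * cc lam β q r (n - i)) * hpow.symm
      · have hpos : ∀ᶠ t in 𝓝 (0 : ℝ), 0 < 1 + lam * r * Real.log (1 + q * t) :=
          continuousAt_const.eventually_lt (by fun_prop (disch := simp)) (by simp)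
        filter_upwards [hpos] with t ht
        rw [← Real.rpow_add ht, neg_div, add_neg_cancel, Real.rpow_zero]

theorem stmt5_general (lam β q r : ℝ) (hr : 0 < r) (n : ℕ) (x : ℝ) :
    K lam β q r n x
      = ∑ k ∈ Finset.range (n + 1),
          (n.factorial : ℝ) / (n - k).factorial * r ^ (n - k) *
            cc lam β q r (n - k) * eps q x k := by
  rw [K, iteratedDeriv_fun_mul (by fun_prop (disch := simp)) (by fun_prop (disch := simp))]
  refine sum_congr rfl fun k hk => ?_
  rw [iteratedDeriv_div_rpow_zero, iteratedDeriv_one_add_mul_log_rpow_zero _ _ _ _ hr.ne']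
  have hfact : (n.choose k : ℝ) * k ! * (n - k)! = n ! := by
    exact_mod_cast choose_mul_factorial_mul_factorial (Nat.lt_succ_iff.mp (mem_range.mp hk))
  field_simp
  rw [← hfact]
  ring

theorem stmt5 (lam β p q r : ℝ) (hlam : lam < 0) (hβ : 0 < β)
    (hp : 0 < p) (hp1 : p < 1) (hq : q = 1 - p) (hr : 0 < r) (n : ℕ) (x : ℝ) :
    K lam β q r n x
      = ∑ k ∈ Finset.range (n + 1),
          (n.factorial : ℝ) / (n - k).factorial * r ^ (n - k) *
            cc lam β q r (n - k) * eps q x k :=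
  stmt5_general lam β q r hr n x
end

section
/- For every n ∈ ℕ and every real x, K^{(β)}_{n,λ}(x) = Σ_{m=0}^n (ϖ(m,n)/m!) · P^{(β)}_{m,λ}(x). -/
open Finset

/-- degenerate Appell polynomials -/
noncomputable def P (lam β p q r : ℝ) (n : ℕ) (x : ℝ) : ℝ :=
  iteratedDeriv n
    (fun z : ℝ => Real.exp (x * z) *
      (1 + lam * r * Real.log (p / (1 - q * Real.exp z))) ^ (-β / lam)) 0

/-- `m`-tuples of positive integers summing to `n` -/
def tuples (m n : ℕ) : Finset (Fin m → ℕ) :=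
  (Fintype.piFinset fun _ : Fin m => Finset.Icc 1 n).filter fun i => ∑ j : Fin m, i j = n

noncomputable def varpi (q : ℝ) (m n : ℕ) : ℝ :=
  ∑ i ∈ tuples m n,
    (-1 : ℝ) ^ (n + m) * n.factorial * ∏ j : Fin m, (1 - q ^ (i j)) / ((i j : ℕ) : ℝ)

/-!
Substituting `z = log ((1 + t) / (1 + q t))` into the generating function of `P` gives that of
`K`: then `1 - q e^z = p / (1 + q t)`, so `p / (1 - q e^z) = 1 + q t`, while
`e^{xz} = ((1 + t) / (1 + q t))^x`. Both the substitution and the generating function of `P` are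
analytic at `0`, so the Taylor coefficients of `K`'s generating function are those of the composed
power series (Faà di Bruno). The substitution has coefficients `(-1)^(k+1) (1 - q^k) / k`; grouping
the compositions of `n` by their number `m` of blocks, the factor in front of `P_m / m!` in
`K_n / n!` is exactly `ϖ(m, n) / n!`.
-/

open Filter Topology

section PowerSeries

variable {𝕜 : Type*} [NontriviallyNormedField 𝕜]

theorem HasFPowerSeriesAt.iteratedDeriv_eq_factorial_mul_coeff [CompleteSpace 𝕜] {f : 𝕜 → 𝕜}
    {pf : FormalMultilinearSeries 𝕜 𝕜 𝕜} {x : 𝕜} (h : HasFPowerSeriesAt f pf x) (n : ℕ) :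
    iteratedDeriv n f x = n.factorial * pf.coeff n := by
  obtain ⟨R, hR⟩ := h
  rw [iteratedDeriv_eq_iteratedFDeriv, ← hR.factorial_smul 1 n, FormalMultilinearSeries.coeff]
  simp [nsmul_eq_mul]

theorem FormalMultilinearSeries.coeff_comp (a b : FormalMultilinearSeries 𝕜 𝕜 𝕜) (n : ℕ) :
    (a.comp b).coeff n = ∑ c : Composition n, a.coeff c.length * ∏ i, b.coeff (c.blocksFun i) := by
  rw [coeff, FormalMultilinearSeries.comp, _root_.sum_apply]
  refine sum_congr rfl fun c _ => ?_
  rw [compAlongComposition_apply, apply_eq_prod_smul_coeff, smul_eq_mul, mul_comm]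
  congr 1

theorem FormalMultilinearSeries.coeff_comp_eq_sum_range (a b : FormalMultilinearSeries 𝕜 𝕜 𝕜)
    (n : ℕ) :
    (a.comp b).coeff n = ∑ m ∈ range (n + 1), a.coeff m *
      ∑ c ∈ univ.filter (fun c : Composition n => c.length = m), ∏ i, b.coeff (c.blocksFun i) := by
  rw [coeff_comp, ← sum_fiberwise_of_maps_to (g := Composition.length)
    fun c _ => mem_range.mpr (Nat.lt_succ_of_le c.length_le)]
  refine sum_congr rfl fun m _ => ?_
  rw [mul_sum]
  refine sum_congr rfl fun c hc => ?_
  congr 2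
  exact (mem_filter.mp hc).2

end PowerSeries

theorem sum_compositions_length_eq_sum_tuples {R : Type*} [CommSemiring R] (f : ℕ → R)
    (m n : ℕ) :
    ∑ c ∈ univ.filter (fun c : Composition n => c.length = m), ∏ i, f (c.blocksFun i)
      = ∑ i ∈ tuples m n, ∏ j, f (i j) := by
  refine sum_bij' (fun c hc j => c.blocksFun (Fin.cast (mem_filter.mp hc).2.symm j))
    (fun i hi => ⟨List.ofFn i, ?_, ?_⟩) ?_ ?_ ?_ ?_ ?_
  · simp only [List.mem_ofFn, forall_exists_index, forall_apply_eq_imp_iff]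
    exact fun j => (mem_Icc.mp (Fintype.mem_piFinset.mp (mem_filter.mp hi).1 j)).1
  · rw [List.sum_ofFn]
    exact (mem_filter.mp hi).2
  · intro c hc
    obtain rfl := (mem_filter.mp hc).2
    refine mem_filter.mpr ⟨Fintype.mem_piFinset.mpr fun j => ?_, c.sum_blocksFun⟩
    exact mem_Icc.mpr ⟨c.one_le_blocksFun _, c.blocksFun_le _⟩
  · intro i _
    simp [Composition.length]
  · intro c hc
    obtain rfl := (mem_filter.mp hc).2
    exact Composition.ext c.ofFn_blocksFun
  · intro i _
    funext j
    simp [Composition.blocksFun]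
  · intro c hc
    obtain rfl := (mem_filter.mp hc).2
    rfl

noncomputable def logRatio (q t : ℝ) : ℝ := Real.log ((1 + t) / (1 + q * t))

-- At `k = 0` the numerator `1 - q ^ 0` vanishes, so the junk value of `/ 0` is harmless.
noncomputable def logRatioCoeff (q : ℝ) (k : ℕ) : ℝ := (-1) ^ (k + 1) * ((1 - q ^ k) / k)

theorem hasFPowerSeriesAt_logRatio (q : ℝ) :
    HasFPowerSeriesAt (logRatio q) (.ofScalars ℝ (logRatioCoeff q)) 0 := by
  rw [hasFPowerSeriesAt_iff]
  have hsmall : ∀ᶠ z in 𝓝 (0 : ℝ), |z| < 1 ∧ |q * z| < 1 :=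
    (ContinuousAt.eventually_lt (by fun_prop) continuousAt_const (by simp)).and
      (ContinuousAt.eventually_lt (by fun_prop) continuousAt_const (by simp))
  filter_upwards [hsmall] with z ⟨hz, hqz⟩
  have hlog := Real.hasSum_pow_div_log_of_abs_lt_one (x := -z) (by rwa [abs_neg])
  have hlogq := Real.hasSum_pow_div_log_of_abs_lt_one (x := -(q * z)) (by rwa [abs_neg])
  have hpos : 0 < 1 + z ∧ 0 < 1 + q * z := by
    constructor <;> linarith [neg_abs_le z, neg_abs_le (q * z)]
  refine (hasSum_nat_add_iff' 1).mp ?_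
  convert hlogq.sub hlog using 1
  · funext k
    simp only [FormalMultilinearSeries.coeff_ofScalars, logRatioCoeff, smul_eq_mul]
    push_cast
    field_simp
    ring
  · simp [logRatio, Real.log_div hpos.1.ne' hpos.2.ne', logRatioCoeff]
    ring

noncomputable def appellGen (lam β p q r x z : ℝ) : ℝ :=
  Real.exp (x * z) * (1 + lam * r * Real.log (p / (1 - q * Real.exp z))) ^ (-β / lam)

theorem P_eq_iteratedDeriv_appellGen (lam β p q r : ℝ) (n : ℕ) (x : ℝ) :
    P lam β p q r n x = iteratedDeriv n (appellGen lam β p q r x) 0 := rfl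

theorem analyticAt_appellGen (lam β r x : ℝ) {p q : ℝ} (hp : p ≠ 0) (hq : q = 1 - p) :
    AnalyticAt ℝ (appellGen lam β p q r x) 0 := by
  set u := fun z => 1 + lam * r * Real.log (p / (1 - q * Real.exp z))
  have hu0 : u 0 = 1 := by simp [u, hq, hp]
  have hu : AnalyticAt ℝ u 0 := by
    refine analyticAt_const.add (analyticAt_const.mul (AnalyticAt.log ?_ ?_))
    · refine analyticAt_const.div (by fun_prop) ?_
      simpa [hq] using hp
    · simp [hq, hp]
  have hexp : AnalyticAt ℝ
      (fun z => Real.exp (x * z) * Real.exp (Real.log (u z) * (-β / lam))) 0 := by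
    fun_prop (disch := simp [hu0])
  refine hexp.congr ?_
  filter_upwards [continuousAt_const.eventually_lt hu.continuousAt (by simp [hu0] : (0:ℝ) < u 0)]
    with z hz
  rw [appellGen, Real.rpow_def_of_pos hz]

theorem K_eq_iteratedDeriv_appellGen_comp_logRatio (lam β r : ℝ) {p q : ℝ} (hp : p ≠ 0)
    (hq : q = 1 - p) (n : ℕ) (x : ℝ) :
    K lam β q r n x = iteratedDeriv n (appellGen lam β p q r x ∘ logRatio q) 0 := by
  refine Filter.EventuallyEq.iteratedDeriv_eq n ?_
  have hpos : ∀ᶠ t in 𝓝 (0 : ℝ), 0 < 1 + t ∧ 0 < 1 + q * t :=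
    (continuousAt_const.eventually_lt (by fun_prop) (by simp)).and
      (continuousAt_const.eventually_lt (by fun_prop) (by simp))
  filter_upwards [hpos] with t ⟨ht, hqt⟩
  have hw : 0 < (1 + t) / (1 + q * t) := div_pos ht hqt
  have hden : 1 - q * ((1 + t) / (1 + q * t)) = p / (1 + q * t) := by
    rw [hq] at hqt ⊢
    field_simp
    ring
  rw [Function.comp_apply, logRatio, appellGen, Real.exp_log hw, hden, div_div_cancel₀ hp,
    Real.rpow_def_of_pos hw, mul_comm x]

theorem varpi_eq_factorial_mul_sum_tuples (q : ℝ) (m n : ℕ) :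
    varpi q m n = n.factorial * ∑ i ∈ tuples m n, ∏ j, logRatioCoeff q (i j) := by
  rw [varpi, mul_sum]
  refine sum_congr rfl fun i hi => ?_
  have hsum : ∑ j, (i j + 1) = n + m := by
    rw [sum_add_distrib, (mem_filter.mp hi).2]
    simp
  simp only [logRatioCoeff, prod_mul_distrib, prod_pow_eq_pow_sum, hsum]
  ring

theorem stmt6_general (lam β p q r : ℝ) (hp : 0 < p) (hq : q = 1 - p) (n : ℕ) (x : ℝ) :
    K lam β q r n x
      = ∑ m ∈ Finset.range (n + 1),
          varpi q m n / m.factorial * P lam β p q r m x := by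
  obtain ⟨pA, hpA⟩ := analyticAt_appellGen lam β r x hp.ne' hq
  have hcomp : HasFPowerSeriesAt (appellGen lam β p q r x ∘ logRatio q)
      (pA.comp (.ofScalars ℝ (logRatioCoeff q))) 0 :=
    HasFPowerSeriesAt.comp (by simpa [logRatio] using hpA) (hasFPowerSeriesAt_logRatio q)
  rw [K_eq_iteratedDeriv_appellGen_comp_logRatio lam β r hp.ne' hq,
    hcomp.iteratedDeriv_eq_factorial_mul_coeff, FormalMultilinearSeries.coeff_comp_eq_sum_range,
    mul_sum]
  refine sum_congr rfl fun m _ => ?_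
  rw [P_eq_iteratedDeriv_appellGen, hpA.iteratedDeriv_eq_factorial_mul_coeff,
    varpi_eq_factorial_mul_sum_tuples, ← sum_compositions_length_eq_sum_tuples]
  simp only [FormalMultilinearSeries.coeff_ofScalars]
  field_simp

theorem stmt6 (lam β p q r : ℝ) (hlam : lam < 0) (hβ : 0 < β)
    (hp : 0 < p) (hp1 : p < 1) (hq : q = 1 - p) (hr : 0 < r) (n : ℕ) (x : ℝ) :
    K lam β q r n x
      = ∑ m ∈ Finset.range (n + 1),
          varpi q m n / m.factorial * P lam β p q r m x :=
  stmt6_general lam β p q r hp hq n x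
end

section
/- For every n ∈ ℕ and all real x, y, K^{(β)}_{n,λ}(x + y) = Σ_{k+l+m=n} (n!/(k! l! m!)) · K^{(β)}_{k,λ}(x) · K^{(β)}_{l,λ}(y) · g_m, the sum over all triples (k,l,m) of nonnegative integers with k + l + m = n. -/
open Finset

/-!
The generating function of `K` at `x + y` factors near `t = 0` as the product of the generating
functions at `x` and at `y` and of `(1 + λ r log(1 + q t)) ^ (β / λ)`, whose derivatives are the
`g_m`; the identity is then the Leibniz rule applied twice, the two binomial coefficients
combining into a trinomial one.
-/

open Topology

section IteratedDeriv

variable {𝕜 : Type*} [NontriviallyNormedField 𝕜] {𝔸 : Type*} [NormedRing 𝔸] [NormedAlgebra 𝕜 𝔸]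

theorem iteratedDeriv_fun_mul_eq_sum_antidiagonal {n : ℕ} {f g : 𝕜 → 𝔸} {x : 𝕜}
    (hf : ContDiffAt 𝕜 n f x) (hg : ContDiffAt 𝕜 n g x) :
    iteratedDeriv n (fun t => f t * g t) x
      = ∑ kl ∈ antidiagonal n, (n.choose kl.1 : 𝔸) * iteratedDeriv kl.1 f x
          * iteratedDeriv kl.2 g x := by
  rw [iteratedDeriv_fun_mul hf hg, Nat.sum_antidiagonal_eq_sum_range_succ_mk]

end IteratedDeriv

theorem Nat.cast_add_choose_mul_add_choose {𝕜 : Type*} [Field 𝕜] [CharZero 𝕜] {k l m : ℕ} :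
    (((k + (l + m)).choose k : 𝕜) * ((l + m).choose l : 𝕜))
      = ((k + (l + m)).factorial : 𝕜) / (k.factorial * l.factorial * m.factorial) := by
  have : ((l + m).factorial : 𝕜) ≠ 0 := Nat.cast_ne_zero.mpr (l + m).factorial_ne_zero
  rw [Nat.cast_add_choose, Nat.cast_add_choose]
  field_simp

namespace Krawtchouk

variable (lam β q r : ℝ)

noncomputable def logFactor (t : ℝ) : ℝ := 1 + lam * r * Real.log (1 + q * t)

noncomputable def ratio (t : ℝ) : ℝ := (1 + t) / (1 + q * t)

noncomputable def genFun (x t : ℝ) : ℝ := ratio q t ^ x * logFactor lam q r t ^ (-β / lam)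

theorem K_eq_iteratedDeriv_genFun (n : ℕ) (x : ℝ) :
    K lam β q r n x = iteratedDeriv n (genFun lam β q r x) 0 := rfl

theorem gg_eq_iteratedDeriv (m : ℕ) :
    gg lam β q r m = iteratedDeriv m (fun t => logFactor lam q r t ^ (β / lam)) 0 := rfl

variable {lam β q r}

theorem contDiffAt_logFactor {n : WithTop ℕ∞} : ContDiffAt ℝ n (logFactor lam q r) 0 :=
  contDiffAt_const.add <| contDiffAt_const.mul <| ContDiffAt.log (by fun_prop) (by simp)

theorem contDiffAt_ratio {n : WithTop ℕ∞} : ContDiffAt ℝ n (ratio q) 0 :=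
  ContDiffAt.div (by fun_prop) (by fun_prop) (by simp)

theorem contDiffAt_logFactor_rpow {n : ℕ} (c : ℝ) :
    ContDiffAt ℝ n (fun t => logFactor lam q r t ^ c) 0 :=
  contDiffAt_logFactor.rpow_const_of_ne (by simp [logFactor])

theorem contDiffAt_genFun {n : ℕ} (x : ℝ) : ContDiffAt ℝ n (genFun lam β q r x) 0 :=
  (contDiffAt_ratio.rpow_const_of_ne (by simp [ratio])).mul (contDiffAt_logFactor_rpow _)

theorem eventually_logFactor_pos : ∀ᶠ t in 𝓝 (0 : ℝ), 0 < logFactor lam q r t :=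
  continuousAt_const.eventually_lt (contDiffAt_logFactor (n := 0)).continuousAt
    (by simp [logFactor])

theorem eventually_ratio_pos : ∀ᶠ t in 𝓝 (0 : ℝ), 0 < ratio q t :=
  continuousAt_const.eventually_lt (contDiffAt_ratio (n := 0)).continuousAt (by simp [ratio])

theorem genFun_add_eventuallyEq (x y : ℝ) :
    genFun lam β q r (x + y) =ᶠ[𝓝 0]
      fun t => genFun lam β q r x t * (genFun lam β q r y t * logFactor lam q r t ^ (β / lam)) := by
  filter_upwards [eventually_ratio_pos (q := q), eventually_logFactor_pos] with t hratio hlog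
  have hcancel : logFactor lam q r t ^ (-β / lam) * logFactor lam q r t ^ (β / lam) = 1 := by
    rw [← Real.rpow_add hlog, neg_div, neg_add_cancel, Real.rpow_zero]
  simp only [genFun, Real.rpow_add hratio]
  linear_combination -(ratio q t ^ x * ratio q t ^ y * logFactor lam q r t ^ (-β / lam)) * hcancel

end Krawtchouk

open Krawtchouk in
theorem stmt8_general (lam β q r : ℝ) (n : ℕ) (x y : ℝ) :
    K lam β q r n (x + y)
      = ∑ kl ∈ Finset.HasAntidiagonal.antidiagonal n,
          ∑ lm ∈ Finset.HasAntidiagonal.antidiagonal kl.2,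
          (n.factorial : ℝ) /
              (kl.1.factorial * lm.1.factorial * lm.2.factorial) *
            K lam β q r kl.1 x * K lam β q r lm.1 y * gg lam β q r lm.2 := by
  rw [K_eq_iteratedDeriv_genFun, (genFun_add_eventuallyEq x y).iteratedDeriv_eq,
    iteratedDeriv_fun_mul_eq_sum_antidiagonal (contDiffAt_genFun x)
      ((contDiffAt_genFun y).mul (contDiffAt_logFactor_rpow _))]
  refine sum_congr rfl fun kl hkl => ?_
  rw [iteratedDeriv_fun_mul_eq_sum_antidiagonal (contDiffAt_genFun y)
    (contDiffAt_logFactor_rpow _), mul_sum]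
  refine sum_congr rfl fun lm hlm => ?_
  obtain rfl : kl.1 + kl.2 = n := mem_antidiagonal.mp hkl
  rw [← mem_antidiagonal.mp hlm, ← Nat.cast_add_choose_mul_add_choose, K_eq_iteratedDeriv_genFun,
    K_eq_iteratedDeriv_genFun, gg_eq_iteratedDeriv]
  ring

theorem stmt8 (lam β p q r : ℝ) (hlam : lam < 0) (hβ : 0 < β)
    (hp : 0 < p) (hp1 : p < 1) (hq : q = 1 - p) (hr : 0 < r) (n : ℕ) (x y : ℝ) :
    K lam β q r n (x + y)
      = ∑ kl ∈ Finset.HasAntidiagonal.antidiagonal n,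
          ∑ lm ∈ Finset.HasAntidiagonal.antidiagonal kl.2,
          (n.factorial : ℝ) /
              (kl.1.factorial * lm.1.factorial * lm.2.factorial) *
            K lam β q r kl.1 x * K lam β q r lm.1 y * gg lam β q r lm.2 :=
  stmt8_general lam β q r n x y
end

section
/- Let k ≥ 1 be an integer. For every n ∈ ℕ, the n-th derivative at z = 0 of z ↦ ((e^z − 1)/(1 − q e^z))^k equals Σ_{j=k}^n C(j−1, k−1) · (q^{j−k}/p^j) · j! · S(n,j) (in particular it vanishes for n < k). Equivalently, ((e^z − 1)/(1 − q e^z))^k = Σ_{n≥k} [ Σ_{j=k}^n C(j−1,k−1) (q^{j−k}/p^j) j! S(n,j) ] z^n/n! for real z near 0. -/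
open Finset

/-!
Under `w = e^z` the operator `d/dz` becomes `θ = w d/dw`, and `θⁿ = ∑ⱼ S(n,j) wʲ (d/dw)ʲ` because
`θ (wʲ Dʲ) = wʲ⁺¹ Dʲ⁺¹ + j wʲ Dʲ` is the Stirling recursion. Hence the `n`-th derivative of
`G ∘ exp` at `0` is `∑ⱼ S(n,j) G⁽ʲ⁾(1)` for every `G` analytic at `1`; taking `G = (w - 1)ʲ`
identifies the analytic `S2` with the combinatorial `Nat.stirlingSecond`. For
`G(w) = ((w - 1)/(1 - q w))ᵏ` we have `G(1 + v) = vᵏ (p - q v)⁻ᵏ`, and Leibniz' rule gives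
`G⁽ʲ⁾(1) = j(j-1)⋯(j-k+1) · k(k+1)⋯(j-1) · q^(j-k) / p^j = C(j-1,k-1) j! q^(j-k) / p^j`.
-/

open Nat Topology

theorem Nat.sum_range_stirlingSecond_succ {R : Type*} [CommSemiring R] (n : ℕ) (a : ℕ → R) :
    ∑ j ∈ range (n + 2), (stirlingSecond (n + 1) j : R) * a j
      = ∑ j ∈ range (n + 1), (stirlingSecond n j : R) * (a (j + 1) + j * a j) := by
  have hshift : ∑ j ∈ range (n + 1), (stirlingSecond n j : R) * (j * a j)
      = ∑ j ∈ range (n + 1), ((j + 1) * stirlingSecond n (j + 1) : R) * a (j + 1) := by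
    rw [sum_range_succ', sum_range_succ (fun j => ((j + 1) * stirlingSecond n (j + 1) : R) * _),
      stirlingSecond_eq_zero_of_lt (lt_add_one n)]
    simp only [Nat.cast_zero, zero_mul, mul_zero, add_zero]
    exact sum_congr rfl fun j _ => by push_cast; ring
  rw [sum_range_succ', stirlingSecond_succ_zero, Nat.cast_zero, zero_mul, add_zero]
  rw [sum_congr rfl fun j _ => mul_add _ _ _, sum_add_distrib, hshift, ← sum_add_distrib]
  refine sum_congr rfl fun j _ => ?_
  push_cast [stirlingSecond_succ_succ]
  ring

theorem Nat.descFactorial_mul_ascFactorial_sub {j k : ℕ} (hk : 1 ≤ k) (hkj : k ≤ j) :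
    j.descFactorial k * k.ascFactorial (j - k) = (j - 1).choose (k - 1) * j ! := by
  have hchoose : (j - 1).choose (j - k) = (j - 1).choose (k - 1) :=
    choose_symm_of_eq_add (by omega)
  rw [ascFactorial_eq_factorial_mul_choose', show k + (j - k) - 1 = j - 1 by omega, hchoose,
    ← mul_assoc, mul_comm (j.descFactorial k), factorial_mul_descFactorial hkj, mul_comm]

section Field

variable {𝕜 : Type*} [NontriviallyNormedField 𝕜]

theorem iteratedDeriv_id_mul_deriv {f : 𝕜 → 𝕜} {x : 𝕜} {n : ℕ}
    (hf : ContDiffAt 𝕜 n (deriv f) x) :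
    iteratedDeriv n (fun w => w * deriv f w) x
      = x * iteratedDeriv (n + 1) f x + n * iteratedDeriv n f x := by
  rw [iteratedDeriv_fun_mul (by fun_prop : ContDiffAt 𝕜 n (fun w : 𝕜 => w) x) hf]
  rcases n with _ | m
  · simp
  · rw [sum_range_succ', sum_range_succ', sum_eq_zero fun i _ => by simp [iteratedDeriv_fun_id]]
    push_cast [iteratedDeriv_fun_id, iteratedDeriv_succ', choose_zero_right, choose_one_right]
    ring

theorem iteratedDeriv_pow_mul_zero {f : 𝕜 → 𝕜} {j : ℕ} (hf : ContDiffAt 𝕜 j f 0) (k : ℕ) :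
    iteratedDeriv j (fun v => v ^ k * f v) 0 = j.descFactorial k * iteratedDeriv (j - k) f 0 := by
  rw [iteratedDeriv_fun_mul (by fun_prop) hf]
  simp only [iteratedDeriv_fun_pow_zero, Nat.cast_ite, Nat.cast_zero, mul_ite, ite_mul, mul_zero,
    zero_mul, sum_ite_eq', mem_range, Nat.lt_succ_iff]
  split_ifs with hkj
  · rw [descFactorial_eq_factorial_mul_choose]; push_cast; ring
  · simp [descFactorial_eq_zero_iff_lt.mpr (not_le.mp hkj)]

theorem iteratedDeriv_inv_pow_linear {a b x : 𝕜} (hx : a - b * x ≠ 0) (i m : ℕ) :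
    iteratedDeriv i (fun v => ((a - b * v) ^ m)⁻¹) x
      = m.ascFactorial i * b ^ i / (a - b * x) ^ (m + i) := by
  induction i generalizing m with
  | zero => simp
  | succ i ih =>
    have hderiv : deriv (fun v => ((a - b * v) ^ m)⁻¹)
        =ᶠ[𝓝 x] fun v => (m * b) * ((a - b * v) ^ (m + 1))⁻¹ := by
      have hopen : IsOpen {v : 𝕜 | a - b * v ≠ 0} := isOpen_ne.preimage (by fun_prop)
      filter_upwards [hopen.mem_nhds hx] with v hv
      have hlin : HasDerivAt (fun v => a - b * v) (-b) v := by
        simpa using ((hasDerivAt_id v).const_mul b).const_sub a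
      rw [((hlin.fun_pow m).fun_inv (pow_ne_zero m hv)).deriv]
      rcases m with _ | m
      · simp
      · simp only [Nat.add_sub_cancel]
        field_simp
        ring
    have hasc : m * (m + 1).ascFactorial i = m.ascFactorial (i + 1) := by
      rw [succ_ascFactorial, ascFactorial_succ]
    rw [iteratedDeriv_succ', hderiv.iteratedDeriv_eq, iteratedDeriv_const_mul_field, ih, ← hasc]
    push_cast
    ring

theorem iteratedDeriv_div_pow_one {p q : 𝕜} (hp : p ≠ 0) (hq : q = 1 - p) (k j : ℕ) :
    iteratedDeriv j (fun w => ((w - 1) / (1 - q * w)) ^ k) 1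
      = j.descFactorial k * k.ascFactorial (j - k) * q ^ (j - k) / p ^ (k + (j - k)) := by
  have hshift : (fun v => ((1 + v - 1) / (1 - q * (1 + v))) ^ k)
      = fun v => v ^ k * ((p - q * v) ^ k)⁻¹ := by
    funext v
    rw [hq, div_pow, div_eq_mul_inv]
    ring_nf
  have hinv : ContDiffAt 𝕜 j (fun v => ((p - q * v) ^ k)⁻¹) 0 :=
    ContDiffAt.inv (by fun_prop) (by simpa using pow_ne_zero k hp)
  have htranslate := congrFun (iteratedDeriv_comp_const_add j
    (fun w => ((w - 1) / (1 - q * w)) ^ k) 1) 0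
  rw [add_zero] at htranslate
  rw [← htranslate, hshift, iteratedDeriv_pow_mul_zero hinv,
    iteratedDeriv_inv_pow_linear (by simpa using hp)]
  simp only [mul_zero, sub_zero]
  ring

end Field

theorem iteratedDeriv_comp_exp_zero {G : ℝ → ℝ} (hG : AnalyticAt ℝ G 1) (n : ℕ) :
    iteratedDeriv n (fun z => G (Real.exp z)) 0
      = ∑ j ∈ range (n + 1), (stirlingSecond n j : ℝ) * iteratedDeriv j G 1 := by
  induction n generalizing G with
  | zero => simp
  | succ n ih =>
    have hθG : AnalyticAt ℝ (fun w => w * deriv G w) 1 := analyticAt_id.mul hG.deriv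
    have hderiv : deriv (fun z => G (Real.exp z)) =ᶠ[𝓝 0]
        fun z => (fun w => w * deriv G w) (Real.exp z) := by
      have hexp : ∀ᶠ z in 𝓝 (0 : ℝ), AnalyticAt ℝ G (Real.exp z) :=
        Real.continuous_exp.continuousAt.eventually (by simpa using hG.eventually_analyticAt)
      filter_upwards [hexp] with z hz
      exact (hz.differentiableAt.hasDerivAt.comp z (Real.hasDerivAt_exp z)).deriv.trans
        (mul_comm _ _)
    rw [iteratedDeriv_succ', hderiv.iteratedDeriv_eq, ih hθG, sum_range_stirlingSecond_succ]
    refine sum_congr rfl fun j _ => ?_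
    rw [iteratedDeriv_id_mul_deriv hG.deriv.contDiffAt, one_mul]

theorem iteratedDeriv_sub_one_pow_one (i j : ℕ) :
    iteratedDeriv i (fun w : ℝ => (w - 1) ^ j) 1 = if i = j then (j ! : ℝ) else 0 := by
  rw [congrFun (iteratedDeriv_comp_sub_const i (· ^ j) (1 : ℝ)) 1, sub_self,
    iteratedDeriv_fun_pow_zero, Nat.cast_ite, Nat.cast_zero]

theorem S2_eq_stirlingSecond_s11 (n j : ℕ) : S2 n j = stirlingSecond n j := by
  have hG : AnalyticAt ℝ (fun w : ℝ => (w - 1) ^ j) 1 := by fun_prop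
  rw [S2, iteratedDeriv_comp_exp_zero hG n]
  simp only [iteratedDeriv_sub_one_pow_one, mul_ite, mul_zero, sum_ite_eq', mem_range]
  split_ifs with hjn
  · field_simp
  · simp [stirlingSecond_eq_zero_of_lt (not_lt.mp hjn)]

theorem stmt11_general (p q : ℝ) (hp : 0 < p) (hq : q = 1 - p)
    (k : ℕ) (hk : 1 ≤ k) (n : ℕ) :
    iteratedDeriv n (fun z : ℝ => ((Real.exp z - 1) / (1 - q * Real.exp z)) ^ k) 0
      = ∑ j ∈ Finset.Icc k n,
          ((j - 1).choose (k - 1) : ℝ) * (q ^ (j - k) / p ^ j) *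
            j.factorial * S2 n j := by
  have hG : AnalyticAt ℝ (fun w : ℝ => ((w - 1) / (1 - q * w)) ^ k) 1 :=
    (AnalyticAt.div (by fun_prop) (by fun_prop) (by simpa [hq] using hp.ne')).pow k
  have hIcc : Icc k n ⊆ range (n + 1) := by
    intro j
    simp only [mem_Icc, mem_range]
    omega
  have hvanish : ∀ j ∈ range (n + 1), j ∉ Icc k n →
      (stirlingSecond n j : ℝ) * iteratedDeriv j (fun w => ((w - 1) / (1 - q * w)) ^ k) 1 = 0 := by
    intro j hjn hjk
    simp only [mem_range, mem_Icc] at hjn hjk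
    rw [iteratedDeriv_div_pow_one hp.ne' hq, descFactorial_eq_zero_iff_lt.mpr (by omega)]
    simp
  rw [iteratedDeriv_comp_exp_zero hG n, ← sum_subset hIcc hvanish]
  refine sum_congr rfl fun j hj => ?_
  obtain ⟨hkj, -⟩ := mem_Icc.mp hj
  have hcomb : (j.descFactorial k * k.ascFactorial (j - k) : ℝ)
      = (j - 1).choose (k - 1) * j ! := by
    exact_mod_cast descFactorial_mul_ascFactorial_sub hk hkj
  rw [iteratedDeriv_div_pow_one hp.ne' hq, S2_eq_stirlingSecond_s11, Nat.add_sub_cancel' hkj, hcomb]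
  ring

theorem stmt11 (p q : ℝ) (hp : 0 < p) (hp1 : p < 1) (hq : q = 1 - p)
    (k : ℕ) (hk : 1 ≤ k) (n : ℕ) :
    iteratedDeriv n (fun z : ℝ => ((Real.exp z - 1) / (1 - q * Real.exp z)) ^ k) 0
      = ∑ j ∈ Finset.Icc k n,
          ((j - 1).choose (k - 1) : ℝ) * (q ^ (j - k) / p ^ j) *
            j.factorial * S2 n j :=
  stmt11_general p q hp hq k hk n
end

section
/- For every n ∈ ℕ and every real x, P^{(β)}_{n,λ}(x) = Σ_{k=0}^n C(n,k) · [ Σ_{i=0}^{n−k} (−1)^i i! · B_{n−k,i}(M_λ(1), …, M_λ(n−k−i+1)) ] · x^k. -/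
/-!
Write `F z = 1 + λ r log (p / (1 - q eᶻ))`. Since `F ^ (-β/λ) * F ^ (β/λ) = 1` near `0`, the
Leibniz rule makes the exponential generating function of the derivatives of `F ^ (-β/λ)` at `0`
the inverse of that of the moments `M`, which is `1 + V` with `V` of order at least one.
Expanding `(1 + V)⁻¹ = ∑ (-V) ^ i` and reading `i! B_{m,i}(M) / m!` off as the `m`-th
coefficient of `V ^ i` (multinomial theorem) identifies these derivatives with the inner sums
of the claim; the Leibniz rule for `exp (x z) * F z ^ (-β/λ)` then gives the formula.
-/

open Finset

/-- moments of the degenerate Pascal measure -/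
noncomputable def M (lam β p q r : ℝ) (j : ℕ) : ℝ :=
  iteratedDeriv j
    (fun z : ℝ => (1 + lam * r * Real.log (p / (1 - q * Real.exp z))) ^ (β / lam)) 0

/-- partial exponential Bell polynomials -/
noncomputable def Bell (n k : ℕ) (x : ℕ → ℝ) : ℝ :=
  ∑ i ∈ (Fintype.piFinset fun _ : Fin (n - k + 1) => Finset.range (n + 1)).filter
      (fun i => (∑ j : Fin (n - k + 1), i j) = k ∧ (∑ j : Fin (n - k + 1), ((j : ℕ) + 1) * i j) = n),
    (n.factorial : ℝ) / (∏ j : Fin (n - k + 1), ((i j).factorial : ℝ)) *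
      ∏ j : Fin (n - k + 1), (x ((j : ℕ) + 1) / (((j : ℕ) + 1).factorial : ℝ)) ^ i j

open scoped ContDiff

section ExponentialGeneratingFunction

open PowerSeries Nat

variable {K : Type*} [Field K]

noncomputable def egf (a : ℕ → K) : K⟦X⟧ := mk fun n => a n / n !

@[simp] lemma coeff_egf (a : ℕ → K) (n : ℕ) : coeff n (egf a) = a n / n ! := coeff_mk _ _

@[simp] lemma constantCoeff_egf (a : ℕ → K) : constantCoeff (egf a) = a 0 := by
  rw [← coeff_zero_eq_constantCoeff_apply, coeff_egf, factorial_zero, cast_one, div_one]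

variable [CharZero K]

lemma eq_factorial_mul_coeff_egf (a : ℕ → K) (n : ℕ) : a n = n ! * coeff n (egf a) := by
  rw [coeff_egf, mul_div_cancel₀ _ (by exact_mod_cast factorial_ne_zero n)]

lemma egf_mul (a b : ℕ → K) :
    egf a * egf b = egf fun n => ∑ k ∈ range (n + 1), n.choose k * a k * b (n - k) := by
  ext n
  rw [coeff_mul, Nat.sum_antidiagonal_eq_sum_range_succ_mk, coeff_egf, sum_div]
  refine sum_congr rfl fun k hk => ?_
  have : (n ! : K) ≠ 0 := by exact_mod_cast factorial_ne_zero n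
  rw [coeff_egf, coeff_egf, Nat.cast_choose K (Nat.lt_succ_iff.1 (mem_range.1 hk))]
  field_simp

end ExponentialGeneratingFunction

section Coefficients

open PowerSeries

lemma coeff_inv_eq_sum_coeff_pow {K : Type*} [Field K] {f : K⟦X⟧} (hf : constantCoeff f = 1)
    (m : ℕ) :
    coeff m f⁻¹ = ∑ i ∈ range (m + 1), (-1) ^ i * coeff m ((f - 1) ^ i) := by
  have hX : X ^ (m + 1) ∣ (1 - f) ^ (m + 1) :=
    pow_dvd_pow_of_dvd (X_dvd_iff.2 (by simp [hf])) _
  have hgeom : ∑ i ∈ range (m + 1), (1 - f) ^ i = f⁻¹ - f⁻¹ * (1 - f) ^ (m + 1) := by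
    rw [← mul_one_sub, ← geom_sum_mul_neg, sub_sub_cancel, mul_comm, mul_assoc,
      PowerSeries.mul_inv_cancel _ (by simp [hf]), mul_one]
  have htail : coeff m (f⁻¹ * (1 - f) ^ (m + 1)) = 0 :=
    (X_pow_dvd_iff.1 (dvd_mul_of_dvd_right hX _)) m (Nat.lt_succ_self m)
  calc coeff m f⁻¹ = coeff m (∑ i ∈ range (m + 1), (1 - f) ^ i) := by
        rw [hgeom, map_sub, htail, sub_zero]
    _ = _ := by
        rw [map_sum]
        refine sum_congr rfl fun i _ => ?_
        rw [← neg_sub, neg_pow, show (-1 : K⟦X⟧) ^ i = C ((-1) ^ i) by simp, coeff_C_mul]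

lemma coeff_sum_C_mul_X_pow_pow {R ι : Type*} [CommSemiring R] [DecidableEq ι] (s : Finset ι)
    (c : ι → R) (e : ι → ℕ) (i d : ℕ) :
    coeff d ((∑ j ∈ s, C (c j) * X ^ e j) ^ i) =
      ∑ k ∈ (s.piAntidiag i).filter (fun k => ∑ j ∈ s, e j * k j = d),
        Nat.multinomial s k * ∏ j ∈ s, c j ^ k j := by
  rw [sum_pow_eq_sum_piAntidiag, map_sum, sum_filter]
  refine sum_congr rfl fun k _ => ?_
  have hprod : ∏ j ∈ s, (C (c j) * X ^ e j) ^ k j =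
      C (∏ j ∈ s, c j ^ k j) * X ^ ∑ j ∈ s, e j * k j := by
    simp only [mul_pow, prod_mul_distrib, ← pow_mul, map_prod, map_pow]
    rw [prod_pow_eq_pow_sum]
  rw [hprod, ← mul_assoc, ← map_natCast C, ← map_mul, coeff_C_mul_X_pow]
  exact if_congr eq_comm rfl rfl

lemma X_mul_trunc_eq_sum {R : Type*} [CommSemiring R] (f : R⟦X⟧) (L : ℕ) :
    X * (trunc L f : R⟦X⟧) = ∑ j : Fin L, C (coeff j f) * X ^ ((j : ℕ) + 1) := by
  rw [trunc_apply, Nat.Ico_zero_eq_range, ← Fin.sum_univ_eq_sum_range,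
    ← Polynomial.coeToPowerSeries.ringHom_apply, map_sum, mul_sum]
  refine sum_congr rfl fun j _ => ?_
  rw [Polynomial.coeToPowerSeries.ringHom_apply, Polynomial.coe_monomial, monomial_eq_C_mul_X_pow]
  ring

lemma coeff_X_mul_pow_eq_coeff_X_mul_trunc_pow {R : Type*} [CommSemiring R] (f : R⟦X⟧)
    {i m : ℕ} (h : i ≤ m) :
    coeff m ((X * f) ^ i) = coeff m ((X * (trunc (m - i + 1) f : R⟦X⟧)) ^ i) := by
  rw [mul_pow, mul_pow, coeff_X_pow_mul', coeff_X_pow_mul', if_pos h, if_pos h]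
  have key (g : R⟦X⟧) : coeff (m - i) g = (trunc (m - i + 1) g).coeff (m - i) := by
    rw [coeff_trunc, if_pos (Nat.lt_succ_self _)]
  rw [key, key ((trunc _ f : R⟦X⟧) ^ i), trunc_trunc_pow]

end Coefficients

section BellPolynomial

open PowerSeries Nat

lemma factorial_mul_Bell_eq_coeff_sum_pow (a : ℕ → ℝ) (m i : ℕ) :
    (i ! : ℝ) * Bell m i a =
      m ! * coeff m ((∑ j : Fin (m - i + 1),
        C (a ((j : ℕ) + 1) / ((j : ℕ) + 1)!) * X ^ ((j : ℕ) + 1)) ^ i) := by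
  rw [Bell, coeff_sum_C_mul_X_pow_pow, mul_sum, mul_sum]
  refine sum_congr ?_ fun k hk => ?_
  · ext k
    simp only [mem_filter, Fintype.mem_piFinset, mem_range, mem_piAntidiag, ne_eq, mem_univ,
      implies_true, and_true]
    refine ⟨fun ⟨_, hs, hw⟩ => ⟨hs, hw⟩, fun ⟨hs, hw⟩ => ⟨fun j => ?_, hs, hw⟩⟩
    calc k j ≤ ((j : ℕ) + 1) * k j := Nat.le_mul_of_pos_left _ (Nat.succ_pos _)
      _ ≤ ∑ j : Fin (m - i + 1), ((j : ℕ) + 1) * k j :=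
          single_le_sum (f := fun j : Fin (m - i + 1) => ((j : ℕ) + 1) * k j)
            (fun _ _ => Nat.zero_le _) (mem_univ j)
      _ < m + 1 := by omega
  · have hspec := multinomial_spec univ k
    rw [(mem_piAntidiag.1 (mem_filter.1 hk).1).1] at hspec
    have hprod : (∏ j, ((k j)! : ℝ)) ≠ 0 := prod_ne_zero_iff.2 fun j _ => by positivity
    rw [← hspec]
    push_cast
    field_simp

lemma factorial_mul_Bell_eq_coeff_egf_sub_pow (a : ℕ → ℝ) {m i : ℕ} (h : i ≤ m) :
    (i ! : ℝ) * Bell m i a = m ! * coeff m ((egf a - C (a 0)) ^ i) := by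
  have hshift : egf a - C (a 0) = X * PowerSeries.mk fun j => coeff (j + 1) (egf a) := by
    conv_lhs => rw [eq_X_mul_shift_add_const (egf a), constantCoeff_egf, add_sub_cancel_right]
  rw [factorial_mul_Bell_eq_coeff_sum_pow, hshift, coeff_X_mul_pow_eq_coeff_X_mul_trunc_pow _ h,
    X_mul_trunc_eq_sum]
  simp only [coeff_mk, coeff_egf]

lemma sum_Bell_eq_coeff_inv_egf (a : ℕ → ℝ) (ha : a 0 = 1) (m : ℕ) :
    ∑ i ∈ range (m + 1), (-1) ^ i * i ! * Bell m i a = m ! * coeff m (egf a)⁻¹ := by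
  rw [coeff_inv_eq_sum_coeff_pow (by simp [ha]), mul_sum]
  refine sum_congr rfl fun i hi => ?_
  rw [mul_assoc, factorial_mul_Bell_eq_coeff_egf_sub_pow a (Nat.lt_succ_iff.1 (mem_range.1 hi)), ha,
    map_one]
  ring

end BellPolynomial

section IteratedDeriv

open Filter PowerSeries Topology

variable {𝕜 : Type*} [NontriviallyNormedField 𝕜] [CharZero 𝕜]
variable {f g : 𝕜 → 𝕜} {x : 𝕜}

lemma egf_iteratedDeriv_mul (hf : ContDiffAt 𝕜 ∞ f x) (hg : ContDiffAt 𝕜 ∞ g x) :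
    egf (fun n => iteratedDeriv n f x) * egf (fun n => iteratedDeriv n g x) =
      egf fun n => iteratedDeriv n (f * g) x := by
  rw [egf_mul]
  congr 1
  funext n
  rw [iteratedDeriv_mul (hf.of_le (by exact_mod_cast le_top))
    (hg.of_le (by exact_mod_cast le_top))]

lemma egf_iteratedDeriv_eq_inv (hf : ContDiffAt 𝕜 ∞ f x) (hg : ContDiffAt 𝕜 ∞ g x)
    (hgx : g x ≠ 0) (hfg : f * g =ᶠ[𝓝 x] 1) :
    egf (fun n => iteratedDeriv n f x) = (egf fun n => iteratedDeriv n g x)⁻¹ := by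
  rw [PowerSeries.eq_inv_iff_mul_eq_one (by simpa using hgx), egf_iteratedDeriv_mul hf hg]
  ext n
  rw [coeff_egf, hfg.iteratedDeriv_eq, Pi.one_def, iteratedDeriv_const, coeff_one]
  split_ifs <;> simp_all

lemma egf_iteratedDeriv_rpow_neg {F : ℝ → ℝ} {x : ℝ} (hF : ContDiffAt ℝ ∞ F x)
    (hFx : 0 < F x) (a : ℝ) :
    egf (fun n => iteratedDeriv n (fun z => F z ^ (-a)) x) =
      (egf fun n => iteratedDeriv n (fun z => F z ^ a) x)⁻¹ := by
  refine egf_iteratedDeriv_eq_inv (hF.rpow_const_of_ne hFx.ne') (hF.rpow_const_of_ne hFx.ne')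
    (Real.rpow_pos_of_pos hFx a).ne' ?_
  filter_upwards [hF.continuousAt.eventually (lt_mem_nhds hFx)] with z hz
  simp [← Real.rpow_add hz]

end IteratedDeriv

theorem stmt14_general (lam β p q r : ℝ)
    (hp : 0 < p) (hq : q = 1 - p) (n : ℕ) (x : ℝ) :
    P lam β p q r n x
      = ∑ k ∈ Finset.range (n + 1),
          (n.choose k : ℝ) *
            (∑ i ∈ Finset.range (n - k + 1),
              (-1 : ℝ) ^ i * i.factorial * Bell (n - k) i (M lam β p q r)) *
          x ^ k := by
  set F : ℝ → ℝ := fun z => 1 + lam * r * Real.log (p / (1 - q * Real.exp z)) with hF_def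
  have hq0 : 1 - q * Real.exp 0 = p := by rw [Real.exp_zero, hq]; ring
  have hF0 : F 0 = 1 := by simp only [hF_def, hq0, div_self hp.ne', Real.log_one]; ring
  have hF : ContDiffAt ℝ ∞ F 0 := by
    have hlog : p / (1 - q * Real.exp 0) ≠ 0 := by rw [hq0]; exact (div_pos hp hp).ne'
    fun_prop (disch := first | exact hlog | (rw [hq0]; exact hp.ne'))
  have hM0 : M lam β p q r 0 = 1 := by
    change F 0 ^ (β / lam) = 1
    rw [hF0, Real.one_rpow]
  have hD (j : ℕ) : iteratedDeriv j (fun z => F z ^ (-β / lam)) 0 =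
      ∑ i ∈ Finset.range (j + 1), (-1 : ℝ) ^ i * i.factorial * Bell j i (M lam β p q r) := by
    refine (eq_factorial_mul_coeff_egf
      (fun j => iteratedDeriv j (fun z => F z ^ (-β / lam)) 0) j).trans ?_
    rw [sum_Bell_eq_coeff_inv_egf _ hM0, neg_div,
      egf_iteratedDeriv_rpow_neg hF (by rw [hF0]; exact one_pos)]
    rfl
  change iteratedDeriv n (fun z => Real.exp (x * z) * F z ^ (-β / lam)) 0 = _
  rw [iteratedDeriv_fun_mul (by fun_prop)
    ((hF.rpow_const_of_ne (by simp [hF0])).of_le (by exact_mod_cast le_top))]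
  refine sum_congr rfl fun k _ => ?_
  simp only [iteratedDeriv_exp_const_mul, hD, mul_zero, Real.exp_zero, mul_one]
  ring

theorem stmt14 (lam β p q r : ℝ) (hlam : lam < 0) (hβ : 0 < β)
    (hp : 0 < p) (hp1 : p < 1) (hq : q = 1 - p) (hr : 0 < r) (n : ℕ) (x : ℝ) :
    P lam β p q r n x
      = ∑ k ∈ Finset.range (n + 1),
          (n.choose k : ℝ) *
            (∑ i ∈ Finset.range (n - k + 1),
              (-1 : ℝ) ^ i * i.factorial * Bell (n - k) i (M lam β p q r)) *
          x ^ k :=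
  stmt14_general lam β p q r hp hq n x
end
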